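/- arXiv:2603.06175 — 6 statements merged into one kernel-verified Lean document; each statement's English description precedes it below -/
import Mathlib

section
/- For every set V ∈ 𝔄⋇𝔅, the function y ↦ P̂_y(V^y) is Q̂-measurable and R_⋇(V) = ∫_Y P̂_y(V^y) dQ̂(y). -/
open MeasureTheory Set
open scoped symmDiff ENNReal

/-- The σ-ideal `M` of `R`-left nil sets. -/
def leftNil {X Y : Type*} {mX : MeasurableSpace X} [MeasurableSpace Y]
    (Py : Y → @Measure X mX) (Q : Measure Y) : Set (Set (X × Y)) :=
  {E | ∃ N : Set Y, MeasurableSet N ∧ Q N = 0 ∧ ∀ y ∉ N, Py y {x | (x, y) ∈ E} = 0}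

/-!
For measurable `W` the section measure `y ↦ P_y(W^y)` is a.e. measurable by the π-λ theorem,
starting from measurable rectangles. A left nil set `N` changes `P_y(V^y)` only for `y` in a
`Q`-null set, since `(W ∆ N)^y = W^y ∆ N^y` and `P_y(N^y) = 0` off that set; hence
`y ↦ P_y(V^y)` agrees a.e. with `y ↦ P_y(W^y)`, whose integral is `R(W)`.
-/

theorem measure_symmDiff_eq_left_of_null {α : Type*} [MeasurableSpace α] {μ : Measure α}
    {s t : Set α} (ht : μ t = 0) : μ (s ∆ t) = μ s :=
  measure_congr <| measure_symmDiff_eq_zero_iff.1 <| by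
    rwa [symmDiff_comm, symmDiff_symmDiff_cancel_left]

section Sections

variable {X Y : Type*} [MeasurableSpace X] [MeasurableSpace Y] {Q : Measure Y}
  {Py : Y → Measure X}

theorem aemeasurable_measure_preimage_prodMk_right [∀ y, IsFiniteMeasure (Py y)]
    (hPy : ∀ A : Set X, MeasurableSet A → AEMeasurable (fun y => Py y A) Q)
    {W : Set (X × Y)} (hW : MeasurableSet W) :
    AEMeasurable (fun y => Py y ((·, y) ⁻¹' W)) Q := by
  classical
  induction W, hW using MeasurableSpace.induction_on_inter generateFrom_prod.symm
    isPiSystem_prod with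
  | empty => simp only [preimage_empty, measure_empty, aemeasurable_const]
  | basic t ht =>
    obtain ⟨A, hA, B, hB, rfl⟩ := ht
    simp only [mk_preimage_prod_left_eq_if, measure_if]
    exact (hPy A hA).indicator hB
  | compl t ht iht =>
    simp_rw [preimage_compl,
      measure_compl (ht.preimage measurable_prodMk_right) (measure_ne_top _ _)]
    exact (hPy univ MeasurableSet.univ).sub iht
  | iUnion f hdisj hf ihf =>
    simp_rw [preimage_iUnion, measure_iUnion (fun i j hij => (hdisj hij).preimage _)
      (fun i => (hf i).preimage measurable_prodMk_right)]
    exact AEMeasurable.tsum ihf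

theorem measure_preimage_symmDiff_leftNil_ae_eq {W N : Set (X × Y)} (hN : N ∈ leftNil Py Q) :
    (fun y => Py y ((·, y) ⁻¹' (W ∆ N))) =ᵐ[Q] fun y => Py y ((·, y) ⁻¹' W) := by
  obtain ⟨N₀, -, hN₀, hnil⟩ := hN
  filter_upwards [measure_eq_zero_iff_ae_notMem.1 hN₀] with y hy
  rw [preimage_symmDiff]
  exact measure_symmDiff_eq_left_of_null (hnil y hy)

end Sections

theorem Rstar_eq_lintegral_sections_general {X Y : Type*} [MeasurableSpace X] [MeasurableSpace Y]
    (Q : Measure Y)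
    (Py : Y → Measure X) [∀ y, IsProbabilityMeasure (Py y)]
    (hPy : ∀ A : Set X, MeasurableSet A → AEMeasurable (fun y => Py y A) Q)
    (R : Measure (X × Y))
    (hR : ∀ E : Set (X × Y), MeasurableSet E → R E = ∫⁻ y, Py y {x | (x, y) ∈ E} ∂Q)
    (V W N : Set (X × Y)) (hW : MeasurableSet W) (hN : N ∈ leftNil Py Q)
    (hV : V = W ∆ N) :
    AEMeasurable (fun y => Py y {x | (x, y) ∈ V}) Q ∧
    R W = ∫⁻ y, Py y {x | (x, y) ∈ V} ∂Q := by
  subst hV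
  have hVW := measure_preimage_symmDiff_leftNil_ae_eq (W := W) hN
  refine ⟨(aemeasurable_measure_preimage_prodMk_right hPy hW).congr hVW.symm, ?_⟩
  rw [hR W hW]
  exact (lintegral_congr_ae hVW).symm

/-- for every `V = W ∆ N ∈ 𝔄⋇𝔅`, the function `y ↦ P̂_y(V^y)` is
`Q̂`-measurable and `R_⋇(V) = R(W) = ∫_Y P̂_y(V^y) dQ̂(y)`. -/
theorem Rstar_eq_lintegral_sections {X Y : Type*} [MeasurableSpace X] [MeasurableSpace Y]
    (P : Measure X) (Q : Measure Y) [IsProbabilityMeasure P] [IsProbabilityMeasure Q]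
    (Py : Y → Measure X) [∀ y, IsProbabilityMeasure (Py y)]
    (hPy : ∀ A : Set X, MeasurableSet A → AEMeasurable (fun y => Py y A) Q)
    (R : Measure (X × Y)) [IsProbabilityMeasure R]
    (hR : ∀ E : Set (X × Y), MeasurableSet E → R E = ∫⁻ y, Py y {x | (x, y) ∈ E} ∂Q)
    (V W N : Set (X × Y)) (hW : MeasurableSet W) (hN : N ∈ leftNil Py Q)
    (hV : V = W ∆ N) :
    AEMeasurable (fun y => Py y {x | (x, y) ∈ V}) Q ∧
    R W = ∫⁻ y, Py y {x | (x, y) ∈ V} ∂Q :=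
  Rstar_eq_lintegral_sections_general Q Py hPy R hR V W N hW hN hV
end

section
/- The completion 𝔄⊗̂𝔅 of the product σ-algebra 𝔄⊗𝔅 with respect to the skew product measure R is contained in 𝔄⋇𝔅, and R_⋇ restricted to 𝔄⊗̂𝔅 equals the completed measure R̂. -/
open MeasureTheory Set
open scoped symmDiff ENNReal

/-- Sections of measurable sets give an a.e.-measurable function. -/
lemma aemeas_section {X Y : Type*} [MeasurableSpace X] [MeasurableSpace Y]
    (Q : Measure Y) (Py : Y → Measure X) [∀ y, IsProbabilityMeasure (Py y)]
    (hPy : ∀ A : Set X, MeasurableSet A → AEMeasurable (fun y => Py y A) Q) :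
    ∀ E : Set (X × Y), MeasurableSet E →
      AEMeasurable (fun y => Py y {x | (x, y) ∈ E}) Q := by
  have hgen := generateFrom_prod (α := X) (β := Y)
  refine MeasurableSpace.induction_on_inter hgen.symm isPiSystem_prod ?_ ?_ ?_ ?_
  · simpa using aemeasurable_const (b := (0 : ℝ≥0∞))
  · intro s hs
    obtain ⟨A, hA, B, hB, rfl⟩ := hs
    have : (fun y => Py y {x | (x, y) ∈ A ×ˢ B}) =
        fun y => B.indicator (fun y => Py y A) y := by
      funext y
      by_cases hy : y ∈ B
      · have : {x | (x, y) ∈ A ×ˢ B} = A := by ext x; simp [hy]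
        simp [this, hy]
      · have : {x | (x, y) ∈ A ×ˢ B} = (∅ : Set X) := by
          ext x; simp [Set.prod, hy]
        simp [this, hy]
    rw [this]
    exact (hPy A hA).indicator hB
  · intro t ht ih
    have : (fun y => Py y {x | (x, y) ∈ tᶜ}) =
        fun y => 1 - Py y {x | (x, y) ∈ t} := by
      funext y
      have hsec : MeasurableSet {x | (x, y) ∈ t} :=
        (measurable_prodMk_right (y := y)) ht
      have : {x | (x, y) ∈ tᶜ} = {x | (x, y) ∈ t}ᶜ := rfl
      rw [this, measure_compl hsec (measure_ne_top _ _)]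
      simp
    rw [this]
    exact (aemeasurable_const (b := (1:ℝ≥0∞))).sub ih
  · intro f hdisj hmeas ih
    have : (fun y => Py y {x | (x, y) ∈ ⋃ i, f i}) =
        fun y => ∑' i, Py y {x | (x, y) ∈ f i} := by
      funext y
      have : {x | (x, y) ∈ ⋃ i, f i} = ⋃ i, {x | (x, y) ∈ f i} := by
        ext x; simp
      rw [this, measure_iUnion]
      · intro i j hij
        exact Set.disjoint_left.2 fun x hxi hxj =>
          Set.disjoint_left.1 (hdisj hij) hxi hxj
      · exact fun i => (measurable_prodMk_right (y := y)) (hmeas i)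
    rw [this]
    exact AEMeasurable.ennreal_tsum ih


/-- the completion `𝔄⊗̂𝔅` of `𝔄⊗𝔅` with respect to the skew product `R`
is contained in `𝔄⋇𝔅`, and on it `R_⋇` agrees with the completed measure `R̂`:
every `R`-null-measurable set `V` decomposes as `V = W ∆ N` with `W ∈ 𝔄⊗𝔅`, `N ∈ M`,
and `R_⋇(V) = R(W) = R̂(V)`. -/
theorem completion_subset_star {X Y : Type*} [MeasurableSpace X] [MeasurableSpace Y]
    (P : Measure X) (Q : Measure Y) [IsProbabilityMeasure P] [IsProbabilityMeasure Q]
    (Py : Y → Measure X) [∀ y, IsProbabilityMeasure (Py y)]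
    (hPy : ∀ A : Set X, MeasurableSet A → AEMeasurable (fun y => Py y A) Q)
    (R : Measure (X × Y)) [IsProbabilityMeasure R]
    (hR : ∀ E : Set (X × Y), MeasurableSet E → R E = ∫⁻ y, Py y {x | (x, y) ∈ E} ∂Q) :
    ∀ V : Set (X × Y), NullMeasurableSet V R →
      ∃ W N : Set (X × Y), MeasurableSet W ∧ N ∈ leftNil Py Q ∧ V = W ∆ N ∧
        R W = R V := by
  intro V hV
  obtain ⟨W, hWmeas, hVW⟩ := hV
  refine ⟨W, V ∆ W, hWmeas, ?_, ?_, (measure_congr hVW).symm⟩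
  · have hnull : R (V ∆ W) = 0 := by
      rw [measure_symmDiff_eq_zero_iff]; exact hVW
    set Z := toMeasurable R (V ∆ W) with hZdef
    have hZmeas : MeasurableSet Z := measurableSet_toMeasurable _ _
    have hZ0 : R Z = 0 := by rw [hZdef, measure_toMeasurable]; exact hnull
    have hint : ∫⁻ y, Py y {x | (x, y) ∈ Z} ∂Q = 0 := by rw [← hR Z hZmeas]; exact hZ0
    have hae : (fun y => Py y {x | (x, y) ∈ Z}) =ᵐ[Q] 0 := by
      rw [← lintegral_eq_zero_iff' (aemeas_section Q Py hPy Z hZmeas)]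
      exact hint
    refine ⟨toMeasurable Q {y | Py y {x | (x, y) ∈ Z} ≠ 0}, measurableSet_toMeasurable _ _, ?_, ?_⟩
    · rw [measure_toMeasurable]
      exact hae
    · intro y hy
      have hy' : y ∉ {y | Py y {x | (x, y) ∈ Z} ≠ 0} :=
        fun h => hy (subset_toMeasurable _ _ h)
      have hZy : Py y {x | (x, y) ∈ Z} = 0 := not_not.1 hy'
      refine measure_mono_null ?_ hZy
      intro x hx
      exact subset_toMeasurable _ _ hx
  · rw [symmDiff_comm V W, symmDiff_symmDiff_cancel_left]
end

section
/- Suppose the stochastic process Ξ(x,y) = ξ_y(x) possesses a ℙ-equivalent R̂-measurable version Θ (i.e., Θ is R̂-measurable and for every y ∈ Y, P̂_y({x : Θ(x,y) ≠ ξ_y(x)}) = 0). Then Ξ is measurable with respect to the σ-algebra 𝔄⋇𝔅; in fact, for every Borel set B ⊆ ℝ, the symmetric difference Ξ⁻¹(B) △ Θ⁻¹(B) belongs to the σ-ideal M. -/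
open MeasureTheory Set
open scoped symmDiff ENNReal

/-- The σ-algebra `𝔄⋇𝔅`. -/
def starSigma {X Y : Type*} {mX : MeasurableSpace X} [MeasurableSpace Y]
    (Py : Y → @Measure X mX) (Q : Measure Y) : MeasurableSpace (X × Y) :=
  MeasurableSpace.generateFrom
    {V | ∃ W N : Set (X × Y), MeasurableSet W ∧ N ∈ leftNil Py Q ∧ V = W ∆ N}

lemma aemeasurable_slice {X Y : Type*} [MeasurableSpace X] [MeasurableSpace Y]
    (Q : Measure Y) (Py : Y → Measure X) [∀ y, IsProbabilityMeasure (Py y)]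
    (hPy : ∀ A : Set X, MeasurableSet A → AEMeasurable (fun y => Py y A) Q) :
    ∀ ⦃E : Set (X × Y)⦄, MeasurableSet E →
      AEMeasurable (fun y => Py y {x | (x, y) ∈ E}) Q := by
  refine MeasurableSpace.induction_on_inter generateFrom_prod.symm isPiSystem_prod ?_ ?_ ?_ ?_
  · simpa using aemeasurable_const (b := (0 : ℝ≥0∞))
  · rintro t ⟨A, hA, B, hB, rfl⟩
    have h : (fun y => Py y {x | (x, y) ∈ A ×ˢ B}) =
        fun y => Py y A * B.indicator 1 y := by
      funext y
      by_cases hy : y ∈ B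
      · have : {x | (x, y) ∈ A ×ˢ B} = A := by ext x; simp [hy]
        simp [this, hy]
      · have : {x | (x, y) ∈ A ×ˢ B} = ∅ := by ext x; simp [hy]
        simp [this, hy]
    rw [h]
    exact (hPy A hA).mul (measurable_one.indicator hB).aemeasurable
  · intro t ht hC
    have hslice : ∀ y, MeasurableSet {x | (x, y) ∈ t} := fun y =>
      ht.preimage measurable_prodMk_right
    have h : (fun y => Py y {x | (x, y) ∈ tᶜ}) =
        fun y => 1 - Py y {x | (x, y) ∈ t} := by
      funext y
      have h2 : {x | (x, y) ∈ tᶜ} = {x | (x, y) ∈ t}ᶜ := rfl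
      rw [h2, measure_compl (hslice y) (measure_ne_top _ _)]
      simp
    rw [h]
    exact aemeasurable_const.sub hC
  · intro f hdisj hmeas hC
    have h : (fun y => Py y {x | (x, y) ∈ ⋃ i, f i}) =
        fun y => ∑' i, Py y {x | (x, y) ∈ f i} := by
      funext y
      have h2 : {x | (x, y) ∈ ⋃ i, f i} = ⋃ i, {x | (x, y) ∈ f i} := by ext x; simp
      rw [h2, measure_iUnion]
      · intro i j hij
        exact Set.disjoint_left.2 fun x hx hx' =>
          Set.disjoint_left.1 (hdisj hij) hx hx'
      · exact fun i => (hmeas i).preimage measurable_prodMk_right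
    rw [h]
    exact AEMeasurable.ennreal_tsum fun i => hC i

lemma null_mem_leftNil {X Y : Type*} [MeasurableSpace X] [MeasurableSpace Y]
    {Q : Measure Y} {Py : Y → Measure X} [∀ y, IsProbabilityMeasure (Py y)]
    (hPy : ∀ A : Set X, MeasurableSet A → AEMeasurable (fun y => Py y A) Q)
    {R : Measure (X × Y)}
    (hR : ∀ E : Set (X × Y), MeasurableSet E → R E = ∫⁻ y, Py y {x | (x, y) ∈ E} ∂Q)
    {S : Set (X × Y)} (hS : R S = 0) : S ∈ leftNil Py Q := by
  obtain ⟨E, hSE, hEm, hE0⟩ := exists_measurable_superset_of_null hS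
  have hint : ∫⁻ y, Py y {x | (x, y) ∈ E} ∂Q = 0 := by rw [← hR E hEm]; exact hE0
  have hae : (fun y => Py y {x | (x, y) ∈ E}) =ᵐ[Q] 0 :=
    (lintegral_eq_zero_iff' (aemeasurable_slice Q Py hPy hEm)).1 hint
  have hnull : Q {y | Py y {x | (x, y) ∈ E} ≠ 0} = 0 := hae
  obtain ⟨N, hsub, hNm, hN0⟩ := exists_measurable_superset_of_null hnull
  refine ⟨N, hNm, hN0, fun y hy => ?_⟩
  have hEy : Py y {x | (x, y) ∈ E} = 0 := by
    by_contra h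
    exact hy (hsub h)
  exact measure_mono_null (fun x hx => hSE hx) hEy

lemma leftNil_mono {X Y : Type*} [MeasurableSpace X] [MeasurableSpace Y]
    {Q : Measure Y} {Py : Y → Measure X}
    {S T : Set (X × Y)} (hST : S ⊆ T) (hT : T ∈ leftNil Py Q) : S ∈ leftNil Py Q := by
  obtain ⟨N, hNm, hN0, h⟩ := hT
  exact ⟨N, hNm, hN0, fun y hy =>
    measure_mono_null (fun x hx => hST hx) (h y hy)⟩

lemma leftNil_union {X Y : Type*} [MeasurableSpace X] [MeasurableSpace Y]
    {Q : Measure Y} {Py : Y → Measure X}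
    {S T : Set (X × Y)} (hS : S ∈ leftNil Py Q) (hT : T ∈ leftNil Py Q) :
    S ∪ T ∈ leftNil Py Q := by
  obtain ⟨N, hNm, hN0, h⟩ := hS
  obtain ⟨N', hNm', hN0', h'⟩ := hT
  refine ⟨N ∪ N', hNm.union hNm', measure_union_null hN0 hN0', fun y hy => ?_⟩
  have h2 : {x | (x, y) ∈ S ∪ T} = {x | (x, y) ∈ S} ∪ {x | (x, y) ∈ T} := rfl
  rw [h2]
  exact measure_union_null (h y fun hm => hy (Or.inl hm)) (h' y fun hm => hy (Or.inr hm))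

/-- if the process `Ξ(x,y) = ξ_y(x)` has a `ℙ`-equivalent `R̂`-measurable
version `Θ`, then for every Borel `B ⊆ ℝ` the symmetric difference `Ξ⁻¹(B) ∆ Θ⁻¹(B)`
lies in `M`, and `Ξ` is `𝔄⋇𝔅`-measurable. -/
theorem measurable_star_of_measurable_version {X Y : Type*}
    [MeasurableSpace X] [MeasurableSpace Y]
    (P : Measure X) (Q : Measure Y) [IsProbabilityMeasure P] [IsProbabilityMeasure Q]
    (Py : Y → Measure X) [∀ y, IsProbabilityMeasure (Py y)]
    (hPy : ∀ A : Set X, MeasurableSet A → AEMeasurable (fun y => Py y A) Q)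
    (R : Measure (X × Y)) [IsProbabilityMeasure R]
    (hR : ∀ E : Set (X × Y), MeasurableSet E → R E = ∫⁻ y, Py y {x | (x, y) ∈ E} ∂Q)
    (ξ : Y → X → ℝ) (hξ : ∀ y, NullMeasurable (ξ y) (Py y))
    (Θ : X × Y → ℝ) (hΘ : NullMeasurable Θ R)
    (heq : ∀ y, Py y {x | Θ (x, y) ≠ ξ y x} = 0) :
    (∀ B : Set ℝ, MeasurableSet B →
        ((fun p : X × Y => ξ p.2 p.1) ⁻¹' B) ∆ (Θ ⁻¹' B) ∈ leftNil Py Q) ∧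
    @Measurable _ _ (starSigma Py Q) _ (fun p : X × Y => ξ p.2 p.1) := by
  have hD : ∀ B : Set ℝ,
      ((fun p : X × Y => ξ p.2 p.1) ⁻¹' B) ∆ (Θ ⁻¹' B) ∈ leftNil Py Q := by
    intro B
    refine ⟨∅, MeasurableSet.empty, measure_empty, fun y _ => ?_⟩
    refine measure_mono_null (fun x hx => ?_) (heq y)
    simp only [mem_setOf_eq]
    intro hne
    rcases hx with ⟨⟨h1, h2⟩⟩ | ⟨⟨h1, h2⟩⟩
    · exact h2 (by simpa [Set.mem_preimage, hne] using h1)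
    · exact h2 (by simpa [Set.mem_preimage, ← hne] using h1)
  refine ⟨fun B _ => hD B, ?_⟩
  intro B hB
  obtain ⟨W, hWm, hWeq⟩ := hΘ hB
  have hnull : R ((Θ ⁻¹' B) ∆ W) = 0 := by
    rw [measure_symmDiff_eq_zero_iff]
    exact hWeq
  have hNmem : (Θ ⁻¹' B) ∆ W ∈ leftNil Py Q := null_mem_leftNil hPy hR hnull
  set Ξ : X × Y → ℝ := fun p => ξ p.2 p.1
  have key : Ξ ⁻¹' B = W ∆ (((Θ ⁻¹' B) ∆ W) ∆ ((Ξ ⁻¹' B) ∆ (Θ ⁻¹' B))) := by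
    ext p
    simp only [Set.mem_symmDiff, Set.mem_preimage]
    tauto
  apply MeasurableSpace.measurableSet_generateFrom
  exact ⟨W, _, hWm, leftNil_mono symmDiff_subset_union (leftNil_union hNmem (hD B)), key⟩
end

section
/- Let F = E △ M where E ∈ 𝔄⊗̂𝔅 (the (P×Q)-completion of the product σ-algebra) and M ∈ M* is a nil set. Then ∫_Y P̂(F^y) dQ̂(y) = (P⊗̂Q)(E) = ∫_X Q̂(F_x) dP̂(x). In particular, the formula R_★(F) := (P×Q)(E) gives a well-defined extension of the completed product measure to the σ-algebra 𝔄★𝔅 generated by (𝔄⊗𝔅) ∪ M*, and R_★(F) equals both the iterated integral of the y-section measures and of the x-section measures. -/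
open MeasureTheory Set
open scoped symmDiff ENNReal

/-- The σ-ideal `M*` of nil sets. -/
def nilStar {X Y : Type*} [MeasurableSpace X] [MeasurableSpace Y]
    (P : Measure X) (Q : Measure Y) : Set (Set (X × Y)) :=
  {E | (∃ N : Set X, MeasurableSet N ∧ P N = 0 ∧ ∀ x ∉ N, Q {y | (x, y) ∈ E} = 0) ∧
       (∃ M : Set Y, MeasurableSet M ∧ Q M = 0 ∧ ∀ y ∉ M, P {x | (x, y) ∈ E} = 0)}

/-!
For `P`-a.e. `x`, the section `Eₓ` of a `P × Q`-null-measurable set is `Q`-a.e. equal to `E'ₓ`,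
where `E'` is measurable with `E =ᵐ E'` (Tonelli applied to the null set `E ∆ E'`), so
Tonelli's formula `(P × Q) E' = ∫ Q(E'ₓ) dP` extends to `E`. A nil set `M` changes the
`x`-sections of `E` only for the `P`-null set of `x` with `Q(Mₓ) ≠ 0`, and symmetrically for
the `y`-sections, so neither iterated integral sees the passage from `E` to `E ∆ M`.
-/

theorem symmDiff_ae_eq_self_of_null {α : Type*} [MeasurableSpace α] {μ : Measure α}
    {s t : Set α} (ht : μ t = 0) : s ∆ t =ᵐ[μ] s :=
  measure_symmDiff_eq_zero_iff.mp
    (by rwa [symmDiff_comm (s ∆ t), symmDiff_symmDiff_cancel_left] : μ (s ∆ t ∆ s) = 0)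

namespace MeasureTheory.Measure

variable {α β : Type*} [MeasurableSpace α] [MeasurableSpace β] {μ : Measure α} {ν : Measure β}
  {s : Set (α × β)}

theorem prod_apply_of_nullMeasurableSet [SFinite ν] (hs : NullMeasurableSet s (μ.prod ν)) :
    μ.prod ν s = ∫⁻ x, ν (Prod.mk x ⁻¹' s) ∂μ := calc
  μ.prod ν s = μ.prod ν (toMeasurable (μ.prod ν) s) := (measure_toMeasurable s).symm
  _ = ∫⁻ x, ν (Prod.mk x ⁻¹' toMeasurable (μ.prod ν) s) ∂μ :=
    prod_apply (measurableSet_toMeasurable _ _)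
  _ = ∫⁻ x, ν (Prod.mk x ⁻¹' s) ∂μ :=
    lintegral_congr_ae <| (ae_ae_of_ae_prod hs.toMeasurable_ae_eq).mono fun _ hx ↦
      measure_congr hx

theorem prod_apply_symm_of_nullMeasurableSet [SFinite μ] [SFinite ν]
    (hs : NullMeasurableSet s (μ.prod ν)) :
    μ.prod ν s = ∫⁻ y, μ ((fun x ↦ (x, y)) ⁻¹' s) ∂ν := by
  have hswap : MeasurePreserving Prod.swap (ν.prod μ) (μ.prod ν) := measurePreserving_swap
  rw [← hswap.measure_preimage hs,
    prod_apply_of_nullMeasurableSet (hs.preimage hswap.quasiMeasurePreserving)]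
  rfl

end MeasureTheory.Measure

theorem ae_sections_null_of_mem_nilStar {X Y : Type*} [MeasurableSpace X] [MeasurableSpace Y]
    {P : Measure X} {Q : Measure Y} {M : Set (X × Y)} (hM : M ∈ nilStar P Q) :
    (∀ᵐ x ∂P, Q {y | (x, y) ∈ M} = 0) ∧ ∀ᵐ y ∂Q, P {x | (x, y) ∈ M} = 0 := by
  obtain ⟨⟨N, -, hN, hNM⟩, ⟨L, -, hL, hLM⟩⟩ := hM
  exact ⟨(measure_eq_zero_iff_ae_notMem.mp hN).mono hNM,
    (measure_eq_zero_iff_ae_notMem.mp hL).mono hLM⟩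

theorem Rbigstar_eq_iterated_sections_general {X Y : Type*} [MeasurableSpace X] [MeasurableSpace Y]
    (P : Measure X) (Q : Measure Y) [IsProbabilityMeasure P] [IsProbabilityMeasure Q]
    (E M F : Set (X × Y)) (hE : NullMeasurableSet E (P.prod Q))
    (hM : M ∈ nilStar P Q) (hF : F = E ∆ M) :
    (∫⁻ y, P {x | (x, y) ∈ F} ∂Q) = (P.prod Q) E ∧
    (P.prod Q) E = ∫⁻ x, Q {y | (x, y) ∈ F} ∂P := by
  obtain ⟨hxM, hyM⟩ := ae_sections_null_of_mem_nilStar hM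
  subst hF
  constructor
  · rw [Measure.prod_apply_symm_of_nullMeasurableSet hE]
    exact lintegral_congr_ae <| hyM.mono fun _ hy ↦ measure_congr (symmDiff_ae_eq_self_of_null hy)
  · rw [Measure.prod_apply_of_nullMeasurableSet hE]
    exact lintegral_congr_ae <| hxM.mono fun _ hx ↦
      (measure_congr (symmDiff_ae_eq_self_of_null hx)).symm

/-- if `F = E ∆ M` with `E ∈ 𝔄⊗̂𝔅` (the `(P×Q)`-completion) and
`M ∈ M*`, then `∫_Y P̂(F^y) dQ̂(y) = (P⊗̂Q)(E) = ∫_X Q̂(F_x) dP̂(x)`; in particular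
`R_★(F) := (P×Q)(E)` is well defined on `𝔄★𝔅` and equals both iterated
section integrals. -/
theorem Rbigstar_eq_iterated_sections {X Y : Type*} [MeasurableSpace X] [MeasurableSpace Y]
    (P : Measure X) (Q : Measure Y) [IsProbabilityMeasure P] [IsProbabilityMeasure Q]
    (hP : P.IsComplete) (hQ : Q.IsComplete)
    (E M F : Set (X × Y)) (hE : NullMeasurableSet E (P.prod Q))
    (hM : M ∈ nilStar P Q) (hF : F = E ∆ M) :
    (∫⁻ y, P {x | (x, y) ∈ F} ∂Q) = (P.prod Q) E ∧
    (P.prod Q) E = ∫⁻ x, Q {y | (x, y) ∈ F} ∂P :=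
  Rbigstar_eq_iterated_sections_general P Q E M F hE hM hF
end

section
/- Generalized Fubini theorem: Let f : X×Y → [0,∞] be measurable with respect to the σ-algebra 𝔄★𝔅 = σ((𝔄⊗𝔅) ∪ M*), and let R_★ be the extension of the product measure P×Q to 𝔄★𝔅. Then for Q-a.e. y the section f(·,y) is 𝔄-measurable, for P-a.e. x the section f(x,·) is 𝔅-measurable, and ∫_{X×Y} f dR_★ = ∫_Y (∫_X f(x,y) dP(x)) dQ(y) = ∫_X (∫_Y f(x,y) dQ(y)) dP(x). -/
/-!
By a σ-algebra argument every `𝔄★𝔅`-measurable set differs from an `𝔄⊗𝔅`-measurable one by a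
nil set, and by approximating with simple functions every `𝔄★𝔅`-measurable `f` agrees, outside a
nil set, with an `𝔄⊗𝔅`-measurable `g`. A nil set has null sections almost everywhere in both
directions, so almost all sections of `f` and `g` agree a.e. (and those of `f` are measurable by
completeness), while `R★` ignores nil sets and restricts to `P×Q` on `𝔄⊗𝔅`. Tonelli for `g` ends
the proof.
-/

open MeasureTheory Set
open scoped symmDiff ENNReal

/-- The σ-algebra `𝔄★𝔅 = σ((𝔄⊗𝔅) ∪ M*)`. -/
def bigStarSigma {X Y : Type*} [MeasurableSpace X] [MeasurableSpace Y]
    (P : Measure X) (Q : Measure Y) : MeasurableSpace (X × Y) :=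
  MeasurableSpace.generateFrom ({E | MeasurableSet E} ∪ nilStar P Q)

open Filter

theorem MeasureTheory.exists_measurableSet_null_forall_notMem_iff_ae {α : Type*}
    [MeasurableSpace α] {μ : Measure α} {p : α → Prop} :
    (∃ N, MeasurableSet N ∧ μ N = 0 ∧ ∀ x ∉ N, p x) ↔ ∀ᵐ x ∂μ, p x := by
  refine ⟨fun ⟨N, _, hN0, hN⟩ => measure_mono_null (fun x hx => ?_) hN0, fun h => ?_⟩
  · exact not_imp_comm.1 (hN x) hx
  · obtain ⟨N, hsub, hN, hN0⟩ := exists_measurable_superset_of_null (ae_iff.1 h)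
    exact ⟨N, hN, hN0, fun x hx => not_not.1 fun hpx => hx (hsub hpx)⟩

theorem EventuallyMeasurable.exists_measurable_eventuallyEq {α : Type*} {m : MeasurableSpace α}
    {l : Filter α} [CountableInterFilter l] {f : α → ℝ≥0∞} (hf : EventuallyMeasurable m l f) :
    ∃ g, Measurable[m] g ∧ f =ᶠ[l] g := by
  refine @Measurable.ennreal_induction _ (eventuallyMeasurableSpace m l)
    (fun f => ∃ g, Measurable[m] g ∧ f =ᶠ[l] g) ?_ ?_ ?_ f hf
  · rintro c s ⟨t, ht, hst⟩
    exact ⟨t.indicator fun _ => c, measurable_const.indicator ht,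
      hst.mem_iff.mono fun x hx => by classical simp only [indicator_apply, hx]⟩
  · rintro _ _ - - - ⟨f', hf', hff'⟩ ⟨g', hg', hgg'⟩
    exact ⟨f' + g', hf'.add hg', EventuallyEq.add hff' hgg'⟩
  · intro _ _ _ ih
    choose g hg hfg using ih
    exact ⟨fun x => ⨆ n, g n x, Measurable.iSup hg,
      (eventually_countable_forall.2 hfg).mono fun x hx => by simp only [hx]⟩

theorem MeasureTheory.Measure.trim_eq_of_forall_measurableSet {α : Type*}
    {m m0 : MeasurableSpace α} (hm : m ≤ m0) {μ : Measure[m0] α} {ν : Measure[m] α}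
    (h : ∀ s, MeasurableSet[m] s → μ s = ν s) : μ.trim hm = ν :=
  @Measure.ext _ m _ _ fun s hs => by rw [trim_measurableSet_eq hm hs, h s hs]

section NilStar

variable {X Y : Type*} [MeasurableSpace X] [MeasurableSpace Y] {P : Measure X} {Q : Measure Y}

theorem mem_nilStar_iff {E : Set (X × Y)} :
    E ∈ nilStar P Q ↔
      (∀ᵐ x ∂P, ∀ᵐ y ∂Q, (x, y) ∉ E) ∧ (∀ᵐ y ∂Q, ∀ᵐ x ∂P, (x, y) ∉ E) := by
  simp only [nilStar, mem_ofPred_eq, exists_measurableSet_null_forall_notMem_iff_ae, ae_iff,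
    not_not]

theorem nilStar_mono {E F : Set (X × Y)} (hEF : E ⊆ F) (hF : F ∈ nilStar P Q) :
    E ∈ nilStar P Q := by
  rw [mem_nilStar_iff] at hF ⊢
  exact ⟨hF.1.mono fun _ hx => hx.mono fun _ hy hE => hy (hEF hE),
    hF.2.mono fun _ hy => hy.mono fun _ hx hE => hx (hEF hE)⟩

theorem sUnion_mem_nilStar {S : Set (Set (X × Y))} (hS : S.Countable)
    (hnil : ∀ E ∈ S, E ∈ nilStar P Q) : ⋃₀ S ∈ nilStar P Q := by
  simp only [mem_nilStar_iff, mem_sUnion, not_exists, not_and] at hnil ⊢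
  exact ⟨((eventually_countable_ball hS).2 fun E hE => (hnil E hE).1).mono fun _ hx =>
      (eventually_countable_ball hS).2 hx,
    ((eventually_countable_ball hS).2 fun E hE => (hnil E hE).2).mono fun _ hy =>
      (eventually_countable_ball hS).2 hy⟩

variable (P Q) in
def nilStarFilter : Filter (X × Y) :=
  .ofCountableUnion (nilStar P Q) (fun _ hS hnil => sUnion_mem_nilStar hS hnil)
    fun _ hF _ hEF => nilStar_mono hEF hF

instance : CountableInterFilter (nilStarFilter P Q) :=
  countableInter_ofCountableUnion _ _ _

theorem eventually_nilStarFilter_iff {p : X × Y → Prop} :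
    (∀ᶠ z in nilStarFilter P Q, p z) ↔
      (∀ᵐ x ∂P, ∀ᵐ y ∂Q, p (x, y)) ∧ (∀ᵐ y ∂Q, ∀ᵐ x ∂P, p (x, y)) := by
  simp only [Filter.Eventually, nilStarFilter, mem_ofCountableUnion, mem_nilStar_iff,
    mem_compl_iff, mem_ofPred_eq, not_not]

theorem ae_le_nilStarFilter {m : MeasurableSpace (X × Y)} {μ : Measure (X × Y)}
    (hμ : ∀ M ∈ nilStar P Q, μ M = 0) : ae μ ≤ nilStarFilter P Q :=
  fun _ hs => mem_ae_iff.2 (hμ _ (mem_ofCountableUnion.1 hs))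

theorem le_bigStarSigma : Prod.instMeasurableSpace ≤ bigStarSigma P Q :=
  fun _ hs => MeasurableSpace.measurableSet_generateFrom (Or.inl hs)

theorem bigStarSigma_le_eventuallyMeasurableSpace :
    bigStarSigma P Q ≤ eventuallyMeasurableSpace Prod.instMeasurableSpace (nilStarFilter P Q) := by
  refine MeasurableSpace.generateFrom_le fun E hE => ?_
  rcases hE with (hE : MeasurableSet E) | hE
  · exact hE.eventuallyMeasurableSet
  · refine ⟨∅, .empty, eventuallyEq_empty.2 (mem_ofCountableUnion.2 ?_)⟩
    simpa only [compl_ofPred, not_not, ofPred_mem_eq] using hE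

end NilStar

/-- generalized Fubini theorem for nonnegative functions:
if `f : X×Y → [0,∞]` is `𝔄★𝔅`-measurable and `R_★` extends `P×Q` to `𝔄★𝔅`
(vanishing on `M*`), then a.e. sections of `f` are measurable and the integral of
`f` w.r.t. `R_★` equals both iterated integrals. -/
theorem generalized_fubini_lintegral {X Y : Type*} [MeasurableSpace X] [MeasurableSpace Y]
    (P : Measure X) (Q : Measure Y) [IsProbabilityMeasure P] [IsProbabilityMeasure Q]
    (hP : P.IsComplete) (hQ : Q.IsComplete)
    (Rstar : @Measure (X × Y) (bigStarSigma P Q))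
    (hRstar : ∀ E : Set (X × Y), MeasurableSet E → Rstar E = (P.prod Q) E)
    (hRnull : ∀ M ∈ nilStar P Q, Rstar M = 0)
    (f : X × Y → ℝ≥0∞) (hf : @Measurable _ _ (bigStarSigma P Q) _ f) :
    (∀ᵐ y ∂Q, Measurable fun x => f (x, y)) ∧
    (∀ᵐ x ∂P, Measurable fun y => f (x, y)) ∧
    (∫⁻ p, f p ∂ Rstar) = ∫⁻ y, ∫⁻ x, f (x, y) ∂P ∂Q ∧
    (∫⁻ p, f p ∂ Rstar) = ∫⁻ x, ∫⁻ y, f (x, y) ∂Q ∂P := by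
  obtain ⟨g, hg, hfg⟩ := EventuallyMeasurable.exists_measurable_eventuallyEq
    (hf.mono bigStarSigma_le_eventuallyMeasurableSpace le_rfl)
  obtain ⟨hfg_left, hfg_right⟩ :
      (∀ᵐ x ∂P, (fun y => f (x, y)) =ᵐ[Q] fun y => g (x, y)) ∧
        ∀ᵐ y ∂Q, (fun x => f (x, y)) =ᵐ[P] fun x => g (x, y) :=
    eventually_nilStarFilter_iff.1 hfg
  have hR : ∫⁻ p, f p ∂ Rstar = ∫⁻ p, g p ∂(P.prod Q) := by
    rw [lintegral_congr_ae (hfg.filter_mono (ae_le_nilStarFilter hRnull)),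
      ← lintegral_trim le_bigStarSigma hg, Measure.trim_eq_of_forall_measurableSet _ hRstar]
  have := hP
  have := hQ
  refine ⟨hfg_right.mono fun y hy => (hg.comp measurable_prodMk_right).congr_ae hy.symm,
    hfg_left.mono fun x hx => (hg.comp measurable_prodMk_left).congr_ae hx.symm, ?_, ?_⟩
  · rw [hR, lintegral_prod_symm _ hg.aemeasurable]
    exact lintegral_congr_ae (hfg_right.mono fun y hy => (lintegral_congr_ae hy).symm)
  · rw [hR, lintegral_prod _ hg.aemeasurable]
    exact lintegral_congr_ae (hfg_left.mono fun x hx => (lintegral_congr_ae hx).symm)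
end

section
/- For complete probability spaces, every set F in the σ-algebra 𝔄★𝔅 = σ((𝔄⊗𝔅) ∪ M*) can be written as F = E △ M with E ∈ 𝔄⊗̂𝔅 (the completion of the product σ-algebra w.r.t. P×Q) and M ∈ M*. -/
open MeasureTheory Set
open scoped symmDiff ENNReal

lemma nilStar_mono_s16 {X Y : Type*} [MeasurableSpace X] [MeasurableSpace Y]
    {P : Measure X} {Q : Measure Y} {A B : Set (X × Y)} (hAB : A ⊆ B)
    (hB : B ∈ nilStar P Q) : A ∈ nilStar P Q := by
  obtain ⟨⟨N, hNm, hN0, hN⟩, ⟨M, hMm, hM0, hM⟩⟩ := hB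
  refine ⟨⟨N, hNm, hN0, fun x hx => ?_⟩, ⟨M, hMm, hM0, fun y hy => ?_⟩⟩
  · exact measure_mono_null (fun y hy => hAB hy) (hN x hx)
  · exact measure_mono_null (fun x hx => hAB hx) (hM y hy)

lemma nilStar_empty {X Y : Type*} [MeasurableSpace X] [MeasurableSpace Y]
    (P : Measure X) (Q : Measure Y) : (∅ : Set (X × Y)) ∈ nilStar P Q := by
  refine ⟨⟨∅, MeasurableSet.empty, measure_empty, fun x _ => ?_⟩,
    ⟨∅, MeasurableSet.empty, measure_empty, fun y _ => ?_⟩⟩ <;> simp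

lemma nilStar_iUnion {X Y : Type*} [MeasurableSpace X] [MeasurableSpace Y]
    {P : Measure X} {Q : Measure Y} {A : ℕ → Set (X × Y)}
    (hA : ∀ n, A n ∈ nilStar P Q) : (⋃ n, A n) ∈ nilStar P Q := by
  have h1 := fun n => (hA n).1
  have h2 := fun n => (hA n).2
  choose N hNm hN0 hN using h1
  choose M hMm hM0 hM using h2
  refine ⟨⟨⋃ n, N n, MeasurableSet.iUnion hNm, measure_iUnion_null hN0,
      fun x hx => ?_⟩,
    ⟨⋃ n, M n, MeasurableSet.iUnion hMm, measure_iUnion_null hM0,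
      fun y hy => ?_⟩⟩
  · have : {y | (x, y) ∈ ⋃ n, A n} = ⋃ n, {y | (x, y) ∈ A n} := by
      ext y; simp
    rw [this]
    exact measure_iUnion_null fun n => hN n x (fun h => hx (mem_iUnion.2 ⟨n, h⟩))
  · have : {x | (x, y) ∈ ⋃ n, A n} = ⋃ n, {x | (x, y) ∈ A n} := by
      ext x; simp
    rw [this]
    exact measure_iUnion_null fun n => hM n y (fun h => hy (mem_iUnion.2 ⟨n, h⟩))

lemma symmDiff_iUnion_subset {α : Type*} (A B : ℕ → Set α) :
    (⋃ n, A n) ∆ (⋃ n, B n) ⊆ ⋃ n, (A n ∆ B n) := by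
  intro x hx
  simp only [symmDiff_def, sup_eq_union, mem_union, mem_diff, mem_iUnion,
    not_exists] at hx ⊢
  rcases hx with ⟨⟨n, hn⟩, h2⟩ | ⟨⟨n, hn⟩, h2⟩
  · exact ⟨n, Or.inl ⟨hn, h2 n⟩⟩
  · exact ⟨n, Or.inr ⟨hn, h2 n⟩⟩

/-- for complete probability spaces, every `F ∈ 𝔄★𝔅` can be
written as `F = E ∆ M` with `E` in the `(P×Q)`-completion of `𝔄⊗𝔅` and `M ∈ M*`. -/
theorem bigStar_decomposition {X Y : Type*} [MeasurableSpace X] [MeasurableSpace Y]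
    (P : Measure X) (Q : Measure Y) [IsProbabilityMeasure P] [IsProbabilityMeasure Q]
    (hP : P.IsComplete) (hQ : Q.IsComplete)
    (F : Set (X × Y)) (hF : MeasurableSet[bigStarSigma P Q] F) :
    ∃ E M : Set (X × Y), NullMeasurableSet E (P.prod Q) ∧ M ∈ nilStar P Q ∧
      F = E ∆ M := by
  have hF' : MeasurableSet[MeasurableSpace.generateFrom
      ({E | MeasurableSet E} ∪ nilStar P Q)] F := hF
  clear hF
  induction F, hF' using MeasurableSpace.generateFrom_induction with
  | hC t ht _ =>
    rcases ht with ht | ht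
    · exact ⟨t, ∅, (show MeasurableSet t from ht).nullMeasurableSet, nilStar_empty P Q, (symmDiff_bot t).symm⟩
    · exact ⟨∅, t, (MeasurableSet.empty).nullMeasurableSet, ht, (bot_symmDiff t).symm⟩
  | empty =>
    exact ⟨∅, ∅, (MeasurableSet.empty).nullMeasurableSet, nilStar_empty P Q,
      (symmDiff_bot ∅).symm⟩
  | compl t ht ih =>
    obtain ⟨E, M, hE, hM, rfl⟩ := ih
    refine ⟨Eᶜ, M, hE.compl, hM, ?_⟩
    ext x; simp [symmDiff]; tauto
  | iUnion s hs ih =>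
    choose E M hE hM hFEM using ih
    refine ⟨⋃ n, E n, (⋃ n, s n) ∆ (⋃ n, E n),
      NullMeasurableSet.iUnion hE, ?_, ?_⟩
    · refine nilStar_mono_s16 (symmDiff_iUnion_subset s E) (nilStar_iUnion fun n => ?_)
      have : s n ∆ E n = M n := by
        rw [hFEM n, symmDiff_comm (E n), symmDiff_symmDiff_cancel_right]
      rw [this]; exact hM n
    · rw [symmDiff_comm, symmDiff_symmDiff_cancel_right]
end
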